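/- arXiv:1003.0613 — 3 statements merged into one kernel-verified Lean document; each statement's English description precedes it below -/
import Mathlib

section
/- Let M be a closed subspace of bounded operators on a Hilbert space H that is a ternary ring of operators, and let u ∈ B(H). If the closed linear span of M*u equals that of M*M, and the closed linear span of uM* equals that of MM*, then the closed linear span of Mu*u equals M. -/
noncomputable section

variable {H : Type*} [NormedAddCommGroup H] [InnerProductSpace ℂ H] [CompleteSpace H]

/-- Closed linear span of a set of bounded operators. -/
def clspan (A : Set (H →L[ℂ] H)) : Set (H →L[ℂ] H) :=
  closure (Submodule.span ℂ A : Set (H →L[ℂ] H))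

/-- Set of all products `a * b` with `a ∈ A`, `b ∈ B`. -/
def pmul (A B : Set (H →L[ℂ] H)) : Set (H →L[ℂ] H) := Set.image2 (· * ·) A B

/-- The set of adjoints of elements of `A`. -/
def sstar (A : Set (H →L[ℂ] H)) : Set (H →L[ℂ] H) := star '' A

/-- `M` is a ternary ring of operators: a norm-closed linear subspace with `M M* M ⊆ M`. -/
structure IsTRO (M : Set (H →L[ℂ] H)) : Prop where
  isClosed : IsClosed M
  zero_mem : (0 : H →L[ℂ] H) ∈ M
  add_mem : ∀ x ∈ M, ∀ y ∈ M, x + y ∈ M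
  smul_mem : ∀ (c : ℂ), ∀ x ∈ M, c • x ∈ M
  mul_mem : ∀ x ∈ M, ∀ y ∈ M, ∀ z ∈ M, x * star y * z ∈ M

/-- `u` is associated to the TRO `M`:  `cl-span(M* u) = cl-span(M* M)` and
`cl-span(u M*) = cl-span(M M*)`. -/
def AssociatedTo (u : H →L[ℂ] H) (M : Set (H →L[ℂ] H)) : Prop :=
  clspan (pmul (sstar M) {u}) = clspan (pmul (sstar M) M) ∧
  clspan (pmul {u} (sstar M)) = clspan (pmul M (sstar M))

namespace TROAux

variable {A B C : Set (H →L[ℂ] H)}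

lemma subset_clspan : A ⊆ clspan A :=
  fun x hx => subset_closure (Submodule.subset_span hx)

lemma clspan_mono (h : A ⊆ B) : clspan A ⊆ clspan B :=
  closure_mono (Submodule.span_mono h)

lemma clspan_minimal {N : Submodule ℂ (H →L[ℂ] H)} (h : A ⊆ N) (hN : IsClosed (N : Set (H →L[ℂ] H))) :
    clspan A ⊆ (N : Set (H →L[ℂ] H)) :=
  closure_minimal (Submodule.span_le.mpr h) hN

lemma isClosed_clspan : IsClosed (clspan A) := isClosed_closure

lemma clspan_submodule : ∃ N : Submodule ℂ (H →L[ℂ] H), (N : Set (H →L[ℂ] H)) = clspan A :=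
  ⟨(Submodule.span ℂ A).topologicalClosure, rfl⟩

lemma clspan_clspan : clspan (clspan A) = clspan A := by
  obtain ⟨N, hN⟩ := clspan_submodule (A := A)
  apply subset_antisymm
  · rw [← hN]
    exact clspan_minimal (by rw [hN]) (hN ▸ isClosed_clspan)
  · exact subset_clspan

/-- Right multiplication preserves closed spans. -/
lemma clspan_pmul_left : clspan (pmul (clspan A) B) = clspan (pmul A B) := by
  apply subset_antisymm
  · obtain ⟨N, hN⟩ := clspan_submodule (A := pmul A B)
    rw [← hN]
    refine clspan_minimal ?_ (hN ▸ isClosed_clspan)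
    rintro _ ⟨a, ha, b, hb, rfl⟩
    -- a ∈ clspan A; the map T ↦ T * b is continuous linear
    set f : (H →L[ℂ] H) →L[ℂ] (H →L[ℂ] H) := (ContinuousLinearMap.mul ℂ (H →L[ℂ] H)).flip b
    have hmap : f '' (Submodule.span ℂ A : Set (H →L[ℂ] H))
        ⊆ (Submodule.span ℂ (pmul A B) : Set (H →L[ℂ] H)) := by
      rintro _ ⟨y, hy, rfl⟩
      have : Submodule.map (f : (H →L[ℂ] H) →ₗ[ℂ] (H →L[ℂ] H)) (Submodule.span ℂ A)
          ≤ Submodule.span ℂ (pmul A B) := by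
        rw [Submodule.map_span, Submodule.span_le]
        rintro _ ⟨z, hz, rfl⟩
        exact Submodule.subset_span ⟨z, hz, b, hb, rfl⟩
      exact this ⟨y, hy, rfl⟩
    have h1 : f a ∈ closure (f '' (Submodule.span ℂ A : Set (H →L[ℂ] H))) :=
      image_closure_subset_closure_image f.continuous ⟨a, ha, rfl⟩
    have h2 : f a ∈ clspan (pmul A B) := closure_mono hmap h1
    show a * b ∈ (N : Set _)
    rw [hN]
    exact h2
  · exact clspan_mono (Set.image2_subset_right subset_clspan)

/-- Left multiplication preserves closed spans. -/
lemma clspan_pmul_right : clspan (pmul A (clspan B)) = clspan (pmul A B) := by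
  apply subset_antisymm
  · obtain ⟨N, hN⟩ := clspan_submodule (A := pmul A B)
    rw [← hN]
    refine clspan_minimal ?_ (hN ▸ isClosed_clspan)
    rintro _ ⟨a, ha, b, hb, rfl⟩
    set f : (H →L[ℂ] H) →L[ℂ] (H →L[ℂ] H) := ContinuousLinearMap.mul ℂ (H →L[ℂ] H) a
    have hmap : f '' (Submodule.span ℂ B : Set (H →L[ℂ] H))
        ⊆ (Submodule.span ℂ (pmul A B) : Set (H →L[ℂ] H)) := by
      rintro _ ⟨y, hy, rfl⟩
      have : Submodule.map (f : (H →L[ℂ] H) →ₗ[ℂ] (H →L[ℂ] H)) (Submodule.span ℂ B)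
          ≤ Submodule.span ℂ (pmul A B) := by
        rw [Submodule.map_span, Submodule.span_le]
        rintro _ ⟨z, hz, rfl⟩
        exact Submodule.subset_span ⟨a, ha, z, hz, rfl⟩
      exact this ⟨y, hy, rfl⟩
    have h1 : f b ∈ closure (f '' (Submodule.span ℂ B : Set (H →L[ℂ] H))) :=
      image_closure_subset_closure_image f.continuous ⟨b, hb, rfl⟩
    have h2 : f b ∈ clspan (pmul A B) := closure_mono hmap h1
    show a * b ∈ (N : Set _)
    rw [hN]
    exact h2
  · exact clspan_mono (Set.image2_subset_left subset_clspan)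

lemma sstar_sstar : sstar (sstar A) = A := by
  simp [sstar, ← Set.image_comp, Function.comp_def]

lemma sstar_pmul : sstar (pmul A B) = pmul (sstar B) (sstar A) := by
  ext x
  constructor
  · rintro ⟨_, ⟨a, ha, b, hb, rfl⟩, rfl⟩
    exact ⟨star b, ⟨b, hb, rfl⟩, star a, ⟨a, ha, rfl⟩, (star_mul a b).symm⟩
  · rintro ⟨_, ⟨b, hb, rfl⟩, _, ⟨a, ha, rfl⟩, rfl⟩
    exact ⟨a * b, ⟨a, ha, b, hb, rfl⟩, star_mul a b⟩

lemma star_mem_span (hx : ∀ x, x ∈ Submodule.span ℂ A →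
    star x ∈ Submodule.span ℂ (sstar A)) : True := trivial

lemma mem_span_star {x : H →L[ℂ] H} (hx : x ∈ Submodule.span ℂ A) :
    star x ∈ Submodule.span ℂ (sstar A) := by
  induction hx using Submodule.span_induction with
  | mem y hy => exact Submodule.subset_span ⟨y, hy, rfl⟩
  | zero => simpa using Submodule.zero_mem _
  | add y z _ _ hy hz => rw [star_add]; exact Submodule.add_mem _ hy hz
  | smul c y _ hy =>
      rw [star_smul]
      exact Submodule.smul_mem _ _ hy

lemma star_span_eq :
    star '' (Submodule.span ℂ A : Set (H →L[ℂ] H))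
      = (Submodule.span ℂ (sstar A) : Set (H →L[ℂ] H)) := by
  apply subset_antisymm
  · rintro _ ⟨y, hy, rfl⟩
    exact mem_span_star hy
  · intro y hy
    refine ⟨star y, ?_, star_star y⟩
    have := mem_span_star (A := sstar A) hy
    rwa [sstar_sstar] at this

lemma sstar_clspan : sstar (clspan A) = clspan (sstar A) := by
  have hcont : Continuous (star : (H →L[ℂ] H) → (H →L[ℂ] H)) := continuous_star
  apply subset_antisymm
  · rintro _ ⟨y, hy, rfl⟩
    have h1 : star y ∈ closure (star '' (Submodule.span ℂ A : Set (H →L[ℂ] H))) :=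
      image_closure_subset_closure_image hcont ⟨y, hy, rfl⟩
    rwa [star_span_eq] at h1
  · intro y hy
    refine ⟨star y, ?_, star_star y⟩
    have h0 : (Submodule.span ℂ (sstar A) : Set (H →L[ℂ] H))
        = star '' (Submodule.span ℂ A : Set (H →L[ℂ] H)) := star_span_eq.symm
    have h1 : star y ∈ closure (star '' (Submodule.span ℂ (sstar A) : Set (H →L[ℂ] H))) :=
      image_closure_subset_closure_image hcont ⟨y, hy, rfl⟩
    have h2 : star '' (Submodule.span ℂ (sstar A) : Set (H →L[ℂ] H))
        = (Submodule.span ℂ A : Set (H →L[ℂ] H)) := by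
      rw [h0, ← Set.image_comp]
      simp [Function.comp_def]
    rwa [h2] at h1

lemma pmul_assoc : pmul (pmul A B) C = pmul A (pmul B C) :=
  Set.image2_assoc (fun a b c => mul_assoc a b c)

/-- The elementary inequality `s (1-s)^m ≤ 1/(m+1)` for `s ∈ [0,1]`. -/
lemma key_ineq (m : ℕ) {s : ℝ} (h0 : 0 ≤ s) (h1 : s ≤ 1) :
    s * (1 - s) ^ m ≤ 1 / (m + 1) := by
  have hb : 1 + (m : ℝ) * s ≤ (1 + s) ^ m := one_add_mul_le_pow (by linarith) m
  have hpow : (0 : ℝ) ≤ (1 - s) ^ m := pow_nonneg (by linarith) m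
  have hmain : (1 + (m : ℝ) * s) * (1 - s) ^ m ≤ 1 := by
    calc (1 + (m : ℝ) * s) * (1 - s) ^ m ≤ (1 + s) ^ m * (1 - s) ^ m :=
          mul_le_mul_of_nonneg_right hb hpow
      _ = ((1 + s) * (1 - s)) ^ m := (mul_pow _ _ m).symm
      _ = (1 - s ^ 2) ^ m := by ring_nf
      _ ≤ 1 := pow_le_one₀ (by nlinarith) (by nlinarith)
  have hs : s * ((m : ℝ) + 1) ≤ 1 + (m : ℝ) * s := by nlinarith
  rw [le_div_iff₀ (by positivity)]
  calc s * (1 - s) ^ m * ((m : ℝ) + 1) = (s * ((m : ℝ) + 1)) * (1 - s) ^ m := by ring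
    _ ≤ (1 + (m : ℝ) * s) * (1 - s) ^ m := mul_le_mul_of_nonneg_right hs hpow
    _ ≤ 1 := hmain

end TROAux

open TROAux in
/-- The TRO span lemma: `cl-span(M M* M) = M`. -/
lemma tro_clspan {M : Set (H →L[ℂ] H)} (hM : IsTRO M) :
    clspan (pmul (pmul M (sstar M)) M) = M := by
  classical
  -- M as a submodule
  let Msub : Submodule ℂ (H →L[ℂ] H) :=
    { carrier := M
      zero_mem' := hM.zero_mem
      add_mem' := fun {x y} hx hy => hM.add_mem x hx y hy
      smul_mem' := fun c x hx => hM.smul_mem c x hx }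
  have hsubM : pmul (pmul M (sstar M)) M ⊆ M := by
    rintro _ ⟨_, ⟨m, hm, _, ⟨n, hn, rfl⟩, rfl⟩, p, hp, rfl⟩
    exact hM.mul_mem m hm n hn p hp
  apply subset_antisymm
  · exact clspan_minimal (N := Msub) hsubM hM.isClosed
  -- hard direction
  intro x hx
  rcases subsingleton_or_nontrivial H with hH | hH
  · -- trivial Hilbert space
    have hss : Subsingleton (H →L[ℂ] H) := ⟨fun f g => by ext v; exact Subsingleton.elim _ _⟩
    have h0 : x = (0 : H →L[ℂ] H) := Subsingleton.elim _ _
    rw [h0]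
    exact subset_closure ((Submodule.span ℂ _).zero_mem)
  -- Nontrivial case: approximate identity argument
  set a : H →L[ℂ] H := star x * x with ha_def
  have ha_sa : IsSelfAdjoint a := IsSelfAdjoint.star_mul_self x
  have ha_nn : (0 : H →L[ℂ] H) ≤ a := star_mul_self_nonneg x
  set R : ℝ := ‖a‖ + 1 with hR_def
  have hR_pos : 0 < R := by positivity
  set N : Submodule ℂ (H →L[ℂ] H) := Submodule.span ℂ (pmul (pmul M (sstar M)) M) with hN_def
  set c : ℕ → (H →L[ℂ] H) := fun n => (1 - R⁻¹ • a) ^ n with hc_def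
  -- the basic selfadjointness of the building block
  have hb_sa : IsSelfAdjoint (1 - R⁻¹ • a) := by
    rw [IsSelfAdjoint, star_sub, star_one, star_smul, star_trivial, ha_sa.star_eq]
  have hc_sa : ∀ n, IsSelfAdjoint (c n) := fun n => hb_sa.pow n
  -- key membership claim
  have claim : ∀ n : ℕ, x * c n ∈ M ∧ x - x * c n ∈ N := by
    intro n
    induction n with
    | zero => simpa [hc_def] using hx
    | succ n ih =>
      obtain ⟨hmem, hN⟩ := ih
      have hgen : x * c n * a ∈ N := by
        apply Submodule.subset_span
        refine ⟨(x * c n) * star x, ⟨x * c n, hmem, star x, ⟨x, hx, rfl⟩, rfl⟩, x, hx, ?_⟩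
        simp [ha_def, mul_assoc]
      have hgenM : x * c n * a ∈ M := by
        have h := hM.mul_mem (x * c n) hmem x hx x hx
        rw [ha_def, ← mul_assoc]
        exact h
      have hstep : x * c (n + 1) = x * c n - R⁻¹ • (x * c n * a) := by
        have : c (n + 1) = c n * (1 - R⁻¹ • a) := by
          simp [hc_def, pow_succ]
        rw [this]
        simp only [mul_sub, mul_one, mul_smul_comm]
        rw [mul_assoc]
      constructor
      · rw [hstep]
        have h1 : R⁻¹ • (x * c n * a) ∈ M := by
          have : ((R : ℂ))⁻¹ • (x * c n * a) ∈ M := hM.smul_mem _ _ hgenM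
          have hrc : ((R : ℂ))⁻¹ • (x * c n * a) = R⁻¹ • (x * c n * a) := by
            simp [← Complex.coe_smul]
          rwa [hrc] at this
        have h2 : x * c n - R⁻¹ • (x * c n * a) = x * c n + ((-1 : ℂ)) • (R⁻¹ • (x * c n * a)) := by
          simp [sub_eq_add_neg]
        rw [h2]
        exact hM.add_mem _ hmem _ (hM.smul_mem _ _ h1)
      · have : x - x * c (n + 1) = (x - x * c n) + R⁻¹ • (x * c n * a) := by
          rw [hstep]; abel
        rw [this]
        refine Submodule.add_mem _ hN ?_
        have : R⁻¹ • (x * c n * a) = ((R : ℂ))⁻¹ • (x * c n * a) := by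
          simp [← Complex.coe_smul]
        rw [this]
        exact Submodule.smul_mem _ _ hgen
  -- the norm estimate
  have est : ∀ n : ℕ, ‖x * c n‖ ^ 2 ≤ R / (2 * n + 1) := by
    intro n
    have hnorm : ‖x * c n‖ ^ 2 = ‖star (x * c n) * (x * c n)‖ := by
      rw [CStarRing.norm_star_mul_self]; ring
    have hform : star (x * c n) * (x * c n) = c n * (a * c n) := by
      rw [star_mul, (hc_sa n).star_eq, ha_def]
      simp only [mul_assoc]
    -- identify `c n` with a cfc
    set g : ℝ → ℝ := fun t => (1 - R⁻¹ * t) ^ n with hg_def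
    have hcfc_base : cfc (fun t : ℝ => 1 - R⁻¹ * t) a = 1 - R⁻¹ • a := by
      have h1 : cfc (fun t : ℝ => (1 : ℝ) - R⁻¹ * t) a
          = cfc (fun _ : ℝ => (1:ℝ)) a - cfc (fun t : ℝ => R⁻¹ * t) a :=
        cfc_sub (fun _ => (1:ℝ)) (fun t => R⁻¹ * t) a (by fun_prop) (by fun_prop)
      have h2 : cfc (fun t : ℝ => R⁻¹ * t) a = R⁻¹ • cfc (fun t : ℝ => t) a :=
        cfc_const_mul R⁻¹ (fun t => t) a (by fun_prop)
      rw [h1, h2, cfc_id' ℝ a, cfc_const_one ℝ a]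
    have hcfc_g : cfc g a = c n := by
      rw [hg_def, hc_def]
      rw [cfc_pow (fun t : ℝ => 1 - R⁻¹ * t) n a (by fun_prop), hcfc_base]
    have hcfc_prod : c n * (a * c n) = cfc (fun t : ℝ => g t * (t * g t)) a := by
      rw [cfc_mul g (fun t => t * g t) a (by rw [hg_def]; fun_prop) (by rw [hg_def]; fun_prop),
        cfc_mul (fun t : ℝ => t) g a (by fun_prop) (by rw [hg_def]; fun_prop),
        cfc_id' ℝ a, hcfc_g]
    have hbound : ‖cfc (fun t : ℝ => g t * (t * g t)) a‖ ≤ R / (2 * n + 1) := by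
      apply norm_cfc_le (by positivity)
      intro t ht
      have ht0 : 0 ≤ t := (StarOrderedRing.nonneg_iff_spectrum_nonneg (R := ℝ) a).mp ha_nn t ht
      have ht1 : t ≤ ‖a‖ := by
        have := spectrum.norm_le_norm_of_mem ht
        rwa [Real.norm_eq_abs, abs_of_nonneg ht0] at this
      have htR : t ≤ R := by rw [hR_def]; linarith
      set s : ℝ := R⁻¹ * t with hs_def
      have hs0 : 0 ≤ s := by positivity
      have hs1 : s ≤ 1 := by
        rw [hs_def, inv_mul_le_iff₀ hR_pos, mul_one]; exact htR
      have h1s : (0:ℝ) ≤ 1 - s := by linarith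
      have ht_eq : t = R * s := by
        rw [hs_def, ← mul_assoc, mul_inv_cancel₀ hR_pos.ne', one_mul]
      have hval : g t * (t * g t) = R * (s * (1 - s) ^ (2 * n)) := by
        simp only [hg_def, hs_def]
        rw [two_mul, pow_add]
        rw [hs_def] at ht_eq
        nth_rewrite 2 [ht_eq]
        ring
      rw [hval, Real.norm_eq_abs,
        abs_of_nonneg (mul_nonneg hR_pos.le (mul_nonneg hs0 (pow_nonneg h1s _)))]
      have hkey := key_ineq (2 * n) hs0 hs1
      calc R * (s * (1 - s) ^ (2 * n)) ≤ R * (1 / (2 * n + 1)) := by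
            apply mul_le_mul_of_nonneg_left _ hR_pos.le
            exact hkey.trans_eq (by norm_num)
        _ = R / (2 * n + 1) := by ring
    rw [hnorm, hform, hcfc_prod]
    exact hbound
  -- conclude by approximation
  have : x ∈ closure (N : Set (H →L[ℂ] H)) := by
    rw [Metric.mem_closure_iff]
    intro ε hε
    obtain ⟨n, hn⟩ := exists_nat_gt (R / (ε ^ 2))
    refine ⟨x - x * c n, (claim n).2, ?_⟩
    have hdist : dist x (x - x * c n) = ‖x * c n‖ := by
      rw [dist_eq_norm]
      congr 1
      abel
    rw [hdist]
    have hlt : R / (2 * n + 1) < ε ^ 2 := by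
      rw [div_lt_iff₀ (by positivity)]
      have h1 : R < (n : ℝ) * ε ^ 2 :=
        (div_lt_iff₀ (by positivity : (0:ℝ) < ε ^ 2)).mp hn
      nlinarith [sq_nonneg ε, (Nat.cast_nonneg n : (0:ℝ) ≤ n)]
    have := est n
    nlinarith [norm_nonneg (x * c n)]
  exact this

open TROAux in
/-- If `cl-span(M* u) = cl-span(M* M)` and `cl-span(u M*) = cl-span(M M*)`, then
`cl-span(M u* u) = M`. -/
theorem stmt1 {M : Set (H →L[ℂ] H)} (hM : IsTRO M) (u : H →L[ℂ] H)
    (h1 : clspan (pmul (sstar M) {u}) = clspan (pmul (sstar M) M))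
    (h2 : clspan (pmul {u} (sstar M)) = clspan (pmul M (sstar M))) :
    clspan (pmul M {star u * u}) = M := by
  have hstar_u : pmul M {star u} = sstar (pmul {u} (sstar M)) := by
    rw [sstar_pmul, sstar_sstar]
    congr 1
    simp [sstar]
  have E1 : clspan (pmul M {star u}) = clspan (pmul M (sstar M)) := by
    rw [hstar_u, ← sstar_clspan, h2, sstar_clspan, sstar_pmul, sstar_sstar]
  have hsingle : pmul ({star u} : Set (H →L[ℂ] H)) {u} = {star u * u} := by
    simp [pmul]
  have hsplit : pmul M {star u * u} = pmul (pmul M {star u}) {u} := by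
    rw [pmul_assoc, hsingle]
  calc clspan (pmul M {star u * u})
      = clspan (pmul (pmul M {star u}) {u}) := by rw [hsplit]
    _ = clspan (pmul (clspan (pmul M {star u})) {u}) := clspan_pmul_left.symm
    _ = clspan (pmul (clspan (pmul M (sstar M))) {u}) := by rw [E1]
    _ = clspan (pmul (pmul M (sstar M)) {u}) := clspan_pmul_left
    _ = clspan (pmul M (pmul (sstar M) {u})) := by rw [pmul_assoc]
    _ = clspan (pmul M (clspan (pmul (sstar M) {u}))) := clspan_pmul_right.symm
    _ = clspan (pmul M (clspan (pmul (sstar M) M))) := by rw [h1]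
    _ = clspan (pmul M (pmul (sstar M) M)) := clspan_pmul_right
    _ = clspan (pmul (pmul M (sstar M)) M) := by rw [pmul_assoc]
    _ = M := tro_clspan hM
end
end

section
/- Let M be a TRO in B(H) and let m ∈ M be associated to M (i.e. cl-span(M*m) = cl-span(M*M) and cl-span(mM*) = cl-span(MM*)). Then m*m is associated to the C*-algebra cl-span(M*M), i.e. cl-span(M*M · m*m) = cl-span(m*m · M*M) = cl-span(M*M). -/
set_option linter.unusedSectionVars false
set_option linter.unusedVariables false
set_option maxHeartbeats 1000000
set_option synthInstance.maxHeartbeats 800000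

noncomputable section

variable {H : Type*} [NormedAddCommGroup H] [InnerProductSpace ℂ H] [CompleteSpace H]

section helpers

variable {S T U S' T' : Set (H →L[ℂ] H)}

lemma subset_clspan : S ⊆ clspan S := fun _ hx => subset_closure (Submodule.subset_span hx)

lemma clspan_le (h : S ⊆ clspan T) : clspan S ⊆ clspan T := by
  have h2 : (Submodule.span ℂ S : Set (H →L[ℂ] H)) ⊆ closure (Submodule.span ℂ T : Set (H →L[ℂ] H)) := by
    have : Submodule.span ℂ S ≤ (Submodule.span ℂ T).topologicalClosure :=
      Submodule.span_le.mpr (by rwa [Submodule.topologicalClosure_coe])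
    intro x hx
    have := this hx
    rwa [← Submodule.topologicalClosure_coe]
  calc clspan S ⊆ closure (closure (Submodule.span ℂ T : Set (H →L[ℂ] H))) := closure_mono h2
    _ = clspan T := closure_closure

lemma clspan_mono (h : S ⊆ T) : clspan S ⊆ clspan T := clspan_le (h.trans subset_clspan)

lemma clspan_idem (S : Set (H →L[ℂ] H)) : clspan (clspan S) = clspan S :=
  subset_antisymm (clspan_le subset_rfl) (clspan_mono subset_clspan)

lemma pmul_clspan_right_subset (S T : Set (H →L[ℂ] H)) :
    pmul S (clspan T) ⊆ clspan (pmul S T) := by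
  rintro _ ⟨s, hs, t, ht, rfl⟩
  set f : (H →L[ℂ] H) →L[ℂ] (H →L[ℂ] H) := ContinuousLinearMap.mul ℂ (H →L[ℂ] H) s with hf
  have h1 : f t ∈ closure (f '' (Submodule.span ℂ T : Set (H →L[ℂ] H))) :=
    image_closure_subset_closure_image f.continuous ⟨t, ht, rfl⟩
  have h2 : f '' (Submodule.span ℂ T : Set (H →L[ℂ] H)) ⊆
      (Submodule.span ℂ (pmul S T) : Set (H →L[ℂ] H)) := by
    have : Submodule.map (f : (H →L[ℂ] H) →ₗ[ℂ] (H →L[ℂ] H)) (Submodule.span ℂ T) ≤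
        Submodule.span ℂ (pmul S T) := by
      rw [Submodule.map_span]
      refine Submodule.span_le.mpr ?_
      rintro _ ⟨t', ht', rfl⟩
      exact Submodule.subset_span ⟨s, hs, t', ht', rfl⟩
    rintro _ ⟨x, hx, rfl⟩
    exact this ⟨x, hx, rfl⟩
  have : f t ∈ clspan (pmul S T) := closure_mono h2 h1
  simpa [hf, ContinuousLinearMap.mul_apply'] using this

lemma pmul_clspan_left_subset (S T : Set (H →L[ℂ] H)) :
    pmul (clspan S) T ⊆ clspan (pmul S T) := by
  rintro _ ⟨s, hs, t, ht, rfl⟩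
  set f : (H →L[ℂ] H) →L[ℂ] (H →L[ℂ] H) := (ContinuousLinearMap.mul ℂ (H →L[ℂ] H)).flip t with hf
  have h1 : f s ∈ closure (f '' (Submodule.span ℂ S : Set (H →L[ℂ] H))) :=
    image_closure_subset_closure_image f.continuous ⟨s, hs, rfl⟩
  have h2 : f '' (Submodule.span ℂ S : Set (H →L[ℂ] H)) ⊆
      (Submodule.span ℂ (pmul S T) : Set (H →L[ℂ] H)) := by
    have : Submodule.map (f : (H →L[ℂ] H) →ₗ[ℂ] (H →L[ℂ] H)) (Submodule.span ℂ S) ≤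
        Submodule.span ℂ (pmul S T) := by
      rw [Submodule.map_span]
      refine Submodule.span_le.mpr ?_
      rintro _ ⟨s', hs', rfl⟩
      exact Submodule.subset_span ⟨s', hs', t, ht, rfl⟩
    rintro _ ⟨x, hx, rfl⟩
    exact this ⟨x, hx, rfl⟩
  have : f s ∈ clspan (pmul S T) := closure_mono h2 h1
  simpa [hf] using this

lemma clspan_pmul_le (h1 : clspan S ⊆ clspan S') (h2 : clspan T ⊆ clspan T') :
    clspan (pmul S T) ⊆ clspan (pmul S' T') := by
  refine clspan_le ?_
  have step1 : pmul S T ⊆ pmul (clspan S') (clspan T') :=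
    Set.image2_subset (subset_clspan.trans h1) (subset_clspan.trans h2)
  have step2 : pmul (clspan S') (clspan T') ⊆ clspan (pmul S' (clspan T')) :=
    pmul_clspan_left_subset _ _
  have step3 : clspan (pmul S' (clspan T')) ⊆ clspan (pmul S' T') :=
    clspan_le (pmul_clspan_right_subset _ _)
  exact step1.trans (step2.trans step3)

lemma clspan_pmul_congr (h1 : clspan S = clspan S') (h2 : clspan T = clspan T') :
    clspan (pmul S T) = clspan (pmul S' T') :=
  subset_antisymm (clspan_pmul_le h1.le h2.le) (clspan_pmul_le h1.ge h2.ge)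

lemma sstar_sstar (S : Set (H →L[ℂ] H)) : sstar (sstar S) = S := by
  simp [sstar, Set.image_image]

lemma sstar_pmul (S T : Set (H →L[ℂ] H)) : sstar (pmul S T) = pmul (sstar T) (sstar S) := by
  ext x
  constructor
  · rintro ⟨_, ⟨s, hs, t, ht, rfl⟩, rfl⟩
    exact ⟨star t, ⟨t, ht, rfl⟩, star s, ⟨s, hs, rfl⟩, (star_mul s t).symm⟩
  · rintro ⟨_, ⟨t, ht, rfl⟩, _, ⟨s, hs, rfl⟩, rfl⟩
    exact ⟨s * t, ⟨s, hs, t, ht, rfl⟩, star_mul s t⟩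

lemma star_mem_span {x : H →L[ℂ] H} (h : x ∈ Submodule.span ℂ S) :
    star x ∈ Submodule.span ℂ (sstar S) := by
  induction h using Submodule.span_induction with
  | mem y hy => exact Submodule.subset_span ⟨y, hy, rfl⟩
  | zero => simp
  | add y z _ _ hy hz => rw [star_add]; exact add_mem hy hz
  | smul c y _ hy => rw [star_smul]; exact Submodule.smul_mem _ _ hy

lemma sstar_clspan_subset (S : Set (H →L[ℂ] H)) : sstar (clspan S) ⊆ clspan (sstar S) := by
  rintro _ ⟨y, hy, rfl⟩
  have h1 : star y ∈ closure (star '' (Submodule.span ℂ S : Set (H →L[ℂ] H))) :=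
    image_closure_subset_closure_image continuous_star ⟨y, hy, rfl⟩
  refine closure_mono ?_ h1
  rintro _ ⟨x, hx, rfl⟩
  exact star_mem_span hx

lemma sstar_clspan (S : Set (H →L[ℂ] H)) : sstar (clspan S) = clspan (sstar S) := by
  refine subset_antisymm (sstar_clspan_subset S) ?_
  have h := sstar_clspan_subset (sstar S)
  rw [sstar_sstar] at h
  have h2 : sstar (sstar (clspan (sstar S))) ⊆ sstar (clspan S) := Set.image_mono h
  rwa [sstar_sstar] at h2

lemma pmul_assoc : pmul (pmul S T) U = pmul S (pmul T U) :=
  Set.image2_assoc (fun _ _ _ => mul_assoc _ _ _)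

lemma pmul_singleton {x y : H →L[ℂ] H} : pmul {x} {y} = ({x * y} : Set (H →L[ℂ] H)) := by
  simp [pmul]

end helpers

section keylemma

lemma poly_bound {R : ℝ} (hR : 0 ≤ R) (m : ℕ) {t : ℝ} (ht0 : 0 ≤ t) (htR : t ≤ R) :
    t * (1 - R⁻¹ * t) ^ m ≤ R / (m + 1) := by
  rcases eq_or_lt_of_le hR with hR0 | hRpos
  · have ht : t = 0 := le_antisymm (hR0 ▸ htR) ht0
    rw [ht, zero_mul]
    positivity
  · set u : ℝ := 1 - R⁻¹ * t with hu
    have hu0 : 0 ≤ u := by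
      have : R⁻¹ * t ≤ R⁻¹ * R := mul_le_mul_of_nonneg_left htR (inv_nonneg.mpr hR)
      rw [inv_mul_cancel₀ (ne_of_gt hRpos)] at this
      simp [hu]; linarith
    have hu1 : u ≤ 1 := by
      have : 0 ≤ R⁻¹ * t := mul_nonneg (inv_nonneg.mpr hR) ht0
      simp [hu]; linarith
    have ht_eq : t = R * (1 - u) := by
      rw [hu, sub_sub_cancel, ← mul_assoc, mul_inv_cancel₀ (ne_of_gt hRpos), one_mul]
    have hsum : ((m : ℝ) + 1) * u ^ m ≤ ∑ k ∈ Finset.range (m + 1), u ^ k := by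
      have : ∀ k ∈ Finset.range (m + 1), u ^ m ≤ u ^ k := by
        intro k hk
        exact pow_le_pow_of_le_one hu0 hu1 (Nat.le_of_lt_succ (Finset.mem_range.mp hk))
      calc ((m : ℝ) + 1) * u ^ m = ∑ _k ∈ Finset.range (m + 1), u ^ m := by
            rw [Finset.sum_const, Finset.card_range, nsmul_eq_mul]
            push_cast
            ring
        _ ≤ _ := Finset.sum_le_sum this
    have hgeom : (1 - u) * ∑ k ∈ Finset.range (m + 1), u ^ k = 1 - u ^ (m + 1) := by
      have h := geom_sum_mul u (m + 1)
      have : (1 - u) * ∑ k ∈ Finset.range (m + 1), u ^ k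
          = -((∑ k ∈ Finset.range (m + 1), u ^ k) * (u - 1)) := by ring
      rw [this, h]; ring
    have hkey : ((m : ℝ) + 1) * ((1 - u) * u ^ m) ≤ 1 := by
      have h1 : ((m : ℝ) + 1) * ((1 - u) * u ^ m) = (1 - u) * (((m : ℝ) + 1) * u ^ m) := by ring
      have h2 : (1 - u) * (((m : ℝ) + 1) * u ^ m) ≤ (1 - u) * ∑ k ∈ Finset.range (m + 1), u ^ k :=
        mul_le_mul_of_nonneg_left hsum (by linarith)
      have h3 : (0 : ℝ) ≤ u ^ (m + 1) := pow_nonneg hu0 _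
      linarith [hgeom]
    have hmpos : (0 : ℝ) < (m : ℝ) + 1 := by positivity
    rw [le_div_iff₀ hmpos, ht_eq]
    calc R * (1 - u) * u ^ m * ((m : ℝ) + 1) = R * (((m : ℝ) + 1) * ((1 - u) * u ^ m)) := by ring
      _ ≤ R * 1 := mul_le_mul_of_nonneg_left hkey hR
      _ = R := mul_one R

lemma mem_clspan_pmul_self {A : Set (H →L[ℂ] H)}
    (hstar : ∀ x ∈ A, star x ∈ A) (hmul : ∀ x ∈ A, ∀ y ∈ A, x * y ∈ A)
    {b : H →L[ℂ] H} (hb : b ∈ A) : b ∈ clspan (pmul A A) := by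
  by_cases hH : Nontrivial H
  case neg =>
    have : Subsingleton (H →L[ℂ] H) := by
      have : Subsingleton H := not_nontrivial_iff_subsingleton.mp hH
      infer_instance
    have hb0 : b = 0 := Subsingleton.elim b 0
    rw [hb0]
    exact subset_closure (Submodule.zero_mem _)
  set a : H →L[ℂ] H := star b * b with ha_def
  have haA : a ∈ A := hmul _ (hstar b hb) _ hb
  have hsa : IsSelfAdjoint a := IsSelfAdjoint.star_mul_self b
  set R : ℝ := ‖a‖ with hR
  set s : Submodule ℂ (H →L[ℂ] H) := Submodule.span ℂ (pmul A A) with hs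
  -- the span is stable under right multiplication by a
  have hra : ∀ x ∈ s, x * a ∈ s := by
    intro x hx
    have hmap : Submodule.map (LinearMap.mulRight ℂ a) s ≤ s := by
      rw [hs, Submodule.map_span]
      refine Submodule.span_le.mpr ?_
      rintro _ ⟨_, ⟨u, hu, v, hv, rfl⟩, rfl⟩
      refine Submodule.subset_span ⟨u, hu, v * a, hmul _ hv _ haA, ?_⟩
      simp [LinearMap.mulRight_apply, mul_assoc]
    exact hmap ⟨x, hx, rfl⟩
  set c : ℕ → (H →L[ℂ] H) := fun n => (1 - R⁻¹ • a) ^ n with hc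
  have hbc : ∀ n, b * c n - b ∈ s := by
    intro n
    induction n with
    | zero => simp [hc]
    | succ n ih =>
      have hsmul_mem : ∀ y ∈ s, (R⁻¹ : ℝ) • y ∈ s := by
        intro y hy
        have : (algebraMap ℝ ℂ R⁻¹) • y = (R⁻¹ : ℝ) • y := IsScalarTower.algebraMap_smul ℂ R⁻¹ y
        rw [← this]
        exact s.smul_mem _ hy
      have hba : b * a ∈ s := Submodule.subset_span ⟨b, hb, a, haA, rfl⟩
      have hstep : b * c (n + 1) - b
          = (b * c n - b) - R⁻¹ • ((b * c n - b) * a) - R⁻¹ • (b * a) := by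
        simp only [hc, pow_succ, mul_sub, mul_one, sub_mul, smul_mul_assoc, mul_smul_comm,
          smul_sub, ← mul_assoc]
        abel
      rw [hstep]
      exact sub_mem (sub_mem ih (hsmul_mem _ (hra _ ih))) (hsmul_mem _ hba)
  have hcsa : IsSelfAdjoint (1 - R⁻¹ • a) :=
    (IsSelfAdjoint.one _).sub ((IsSelfAdjoint.all R⁻¹).smul hsa)
  have hcomm : ∀ n, Commute a (c n) :=
    fun n => (((Commute.one_right a).sub_right ((Commute.refl a).smul_right R⁻¹)).pow_right n)
  have hnormsq : ∀ n, ‖b * c n‖ * ‖b * c n‖ ≤ R / (n + n + 1) := by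
    intro n
    have e1 : star (b * c n) * (b * c n) = a * (1 - R⁻¹ • a) ^ (n + n) := by
      rw [star_mul, (hcsa.pow n).star_eq]
      calc c n ^ 1 * star b * (b * c n) = c n * (star b * b) * c n := by
            rw [pow_one]; simp only [mul_assoc]
        _ = c n * a * c n := by rw [← ha_def]
        _ = a * c n * c n := by rw [← (hcomm n).eq]
        _ = a * (1 - R⁻¹ • a) ^ (n + n) := by rw [mul_assoc, hc]; rw [← pow_add]
    have e2 : cfc (fun t : ℝ => t * (1 - R⁻¹ * t) ^ (n + n)) a
        = a * (1 - R⁻¹ • a) ^ (n + n) := by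
      have h2 : cfc (fun t : ℝ => 1 - R⁻¹ * t) a = 1 - R⁻¹ • a := by
        rw [cfc_sub (fun _ : ℝ => (1 : ℝ)) (fun t : ℝ => R⁻¹ * t) a, cfc_const_one ℝ a,
          cfc_const_mul_id R⁻¹ a]
      have h3 : cfc (fun t : ℝ => (1 - R⁻¹ * t) ^ (n + n)) a = (1 - R⁻¹ • a) ^ (n + n) := by
        rw [cfc_pow (fun t : ℝ => 1 - R⁻¹ * t) (n + n) a, h2]
      rw [cfc_mul (fun t : ℝ => t) (fun t : ℝ => (1 - R⁻¹ * t) ^ (n + n)) a, cfc_id' ℝ a, h3]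
    have e3 : ‖cfc (fun t : ℝ => t * (1 - R⁻¹ * t) ^ (n + n)) a‖ ≤ R / (n + n + 1) := by
      refine norm_cfc_le (by positivity) ?_
      intro t ht
      have ht0 : 0 ≤ t := spectrum_star_mul_self_nonneg t (ha_def ▸ ht)
      have htR : t ≤ R := by
        have := spectrum.norm_le_norm_of_mem ht
        rw [Real.norm_eq_abs] at this
        calc t ≤ |t| := le_abs_self t
          _ ≤ ‖a‖ := this
      have hnn : (0 : ℝ) ≤ t * (1 - R⁻¹ * t) ^ (n + n) :=
        mul_nonneg ht0 (Even.pow_nonneg (Even.add_self n) _)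
      rw [Real.norm_eq_abs, abs_of_nonneg hnn]
      have := poly_bound (norm_nonneg a) (n + n) ht0 htR
      calc t * (1 - R⁻¹ * t) ^ (n + n) ≤ R / ((n + n : ℕ) + 1) := this
        _ = R / (n + n + 1) := by push_cast; ring
    calc ‖b * c n‖ * ‖b * c n‖ = ‖star (b * c n) * (b * c n)‖ := CStarRing.norm_star_mul_self.symm
      _ = ‖cfc (fun t : ℝ => t * (1 - R⁻¹ * t) ^ (n + n)) a‖ := by rw [e1, e2]
      _ ≤ R / (n + n + 1) := e3
  -- conclude
  have hclosed : clspan (pmul A A) = closure (s : Set (H →L[ℂ] H)) := rfl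
  rw [hclosed]
  refine Metric.mem_closure_iff.mpr ?_
  intro ε hε
  obtain ⟨n, hn⟩ := exists_nat_gt (R / (ε * ε))
  have hRnn : 0 ≤ R := norm_nonneg a
  have hεsq : 0 < ε * ε := mul_pos hε hε
  have hbound : R / ((n : ℝ) + n + 1) < ε * ε := by
    rw [div_lt_iff₀ (by positivity)]
    have h1 : R < (n : ℝ) * (ε * ε) := (div_lt_iff₀ hεsq).mp hn
    nlinarith [hεsq, Nat.cast_nonneg (α := ℝ) n]
  refine ⟨-(b * c n - b), s.neg_mem (hbc n), ?_⟩
  rw [dist_eq_norm]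
  have hd : ‖b - -(b * c n - b)‖ = ‖b * c n‖ := by
    congr 1
    abel
  rw [hd]
  nlinarith [hnormsq n, norm_nonneg (b * c n)]

end keylemma

/-- If `m ∈ M` is associated to the TRO `M`, then `m* m` is associated to the C*-algebra
`cl-span(M* M)`, i.e. `cl-span(M*M · m*m) = cl-span(m*m · M*M) = cl-span(M*M)`. -/
theorem stmt3 {M : Set (H →L[ℂ] H)} (hM : IsTRO M) (m : H →L[ℂ] H)
    (hmM : m ∈ M) (hm : AssociatedTo m M) :
    clspan (pmul (clspan (pmul (sstar M) M)) {star m * m}) = clspan (pmul (sstar M) M) ∧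
    clspan (pmul {star m * m} (clspan (pmul (sstar M) M))) = clspan (pmul (sstar M) M) := by
  obtain ⟨h1, h2⟩ := hm
  set A' : Set (H →L[ℂ] H) := pmul (sstar M) M with hA'
  have hA'mul : pmul A' A' ⊆ A' := by
    rintro _ ⟨x, hx, y, hy, rfl⟩
    obtain ⟨_, ⟨u, hu, rfl⟩, v, hv, rfl⟩ := hx
    obtain ⟨_, ⟨w, hw, rfl⟩, z, hz, rfl⟩ := hy
    refine ⟨star u, ⟨u, hu, rfl⟩, v * star w * z, hM.mul_mem v hv w hw z hz, ?_⟩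
    simp only [mul_assoc]
  have hA'star : sstar A' = A' := by rw [hA', sstar_pmul, sstar_sstar]
  have hAstar : ∀ x ∈ clspan A', star x ∈ clspan A' := by
    intro x hx
    have hx2 : star x ∈ sstar (clspan A') := ⟨x, hx, rfl⟩
    rwa [sstar_clspan, hA'star] at hx2
  have hAmul : ∀ x ∈ clspan A', ∀ y ∈ clspan A', x * y ∈ clspan A' := by
    intro x hx y hy
    have hxy : (x * y) ∈ pmul (clspan A') (clspan A') := ⟨x, hx, y, hy, rfl⟩
    have hsub : pmul (clspan A') (clspan A') ⊆ clspan (pmul A' A') := by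
      intro z hz
      exact clspan_le (pmul_clspan_right_subset A' A') (pmul_clspan_left_subset A' (clspan A') hz)
    exact clspan_le (hA'mul.trans subset_clspan) (hsub hxy)
  have h2s : clspan (pmul M {star m}) = clspan (pmul M (sstar M)) := by
    have hst := congrArg sstar h2
    rw [sstar_clspan, sstar_clspan, sstar_pmul, sstar_pmul, sstar_sstar] at hst
    rwa [(by simp [sstar] : sstar ({m} : Set (H →L[ℂ] H)) = {star m})] at hst
  have c7 : clspan (pmul A' A') = clspan A' := by
    refine subset_antisymm (clspan_le (hA'mul.trans subset_clspan)) (clspan_le ?_)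
    intro b hb
    have hmem := mem_clspan_pmul_self hAstar hAmul (subset_clspan hb)
    have hcc : clspan (pmul (clspan A') (clspan A')) = clspan (pmul A' A') :=
      clspan_pmul_congr (clspan_idem A') (clspan_idem A')
    rwa [hcc] at hmem
  have key1 : clspan (pmul (clspan A') {star m * m}) = clspan A' := by
    have c2 : pmul A' {star m * m} = pmul (sstar M) (pmul (pmul M {star m}) {m}) := by
      rw [hA', ← pmul_singleton (x := star m) (y := m), pmul_assoc, ← pmul_assoc (S := M)]
    have c4 : pmul (pmul M (sstar M)) ({m} : Set (H →L[ℂ] H)) = pmul M (pmul (sstar M) {m}) :=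
      pmul_assoc
    have c6 : pmul (sstar M) (pmul M (pmul (sstar M) M)) = pmul A' A' := by
      rw [hA', ← pmul_assoc]
    calc clspan (pmul (clspan A') {star m * m})
        = clspan (pmul A' {star m * m}) := clspan_pmul_congr (clspan_idem A') rfl
      _ = clspan (pmul (sstar M) (pmul (pmul M {star m}) {m})) := by rw [c2]
      _ = clspan (pmul (sstar M) (pmul (pmul M (sstar M)) {m})) :=
          clspan_pmul_congr rfl (clspan_pmul_congr h2s rfl)
      _ = clspan (pmul (sstar M) (pmul M (pmul (sstar M) {m}))) := by rw [c4]
      _ = clspan (pmul (sstar M) (pmul M (pmul (sstar M) M))) :=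
          clspan_pmul_congr rfl (clspan_pmul_congr rfl h1)
      _ = clspan (pmul A' A') := by rw [c6]
      _ = clspan A' := c7
  have hstarmm : sstar ({star m * m} : Set (H →L[ℂ] H)) = {star m * m} := by
    simp [sstar, star_mul]
  have key2 : clspan (pmul {star m * m} (clspan A')) = clspan A' := by
    have hst := congrArg sstar key1
    rw [sstar_clspan, sstar_clspan, sstar_pmul, hstarmm, sstar_clspan, hA'star] at hst
    exact hst
  exact ⟨key1, key2⟩
end
end

section
/- Let M be a TRO in B(H) and u a partial isometry associated to M. If the closure of uH equals the closure of MH, then the closure of u*H equals the closure of M*H. -/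
noncomputable section

variable {H : Type*} [NormedAddCommGroup H] [InnerProductSpace ℂ H] [CompleteSpace H]

/-- The set `A·H` of all vectors `x ξ` with `x ∈ A`, `ξ ∈ H`. -/
def appSet (A : Set (H →L[ℂ] H)) : Set H := {v | ∃ x ∈ A, ∃ ξ : H, v = x ξ}

open scoped InnerProductSpace

/-- `clspan A` is contained in any closed submodule containing `A`. -/
lemma clspan_subset_submodule {A : Set (H →L[ℂ] H)} {S : Submodule ℂ (H →L[ℂ] H)}
    (hS : IsClosed (S : Set (H →L[ℂ] H))) (hA : A ⊆ S) : clspan A ⊆ (S : Set (H →L[ℂ] H)) :=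
  closure_minimal (Submodule.span_le.mpr hA) hS

lemma subset_clspan_s7 {A : Set (H →L[ℂ] H)} : A ⊆ clspan A :=
  (Submodule.subset_span (R := ℂ)).trans subset_closure

/-- If every element of `A` kills `η`, so does every element of `clspan A`. -/
lemma clspan_apply_eq_zero {A : Set (H →L[ℂ] H)} {η : H}
    (hA : ∀ a ∈ A, a η = 0) {T : H →L[ℂ] H} (hT : T ∈ clspan A) : T η = 0 := by
  have hker : IsClosed ((LinearMap.ker (ContinuousLinearMap.apply ℂ H η) :
      Submodule ℂ (H →L[ℂ] H)) : Set (H →L[ℂ] H)) :=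
    (by convert ContinuousLinearMap.isClosed_ker (ContinuousLinearMap.apply ℂ H η) using 0)
  have := clspan_subset_submodule hker (fun a ha => by
    simpa [LinearMap.mem_ker] using hA a ha) hT
  simpa [LinearMap.mem_ker] using this

/-- The TRO `M` as a submodule. -/
def troSubmodule {M : Set (H →L[ℂ] H)} (hM : IsTRO M) : Submodule ℂ (H →L[ℂ] H) where
  carrier := M
  zero_mem' := hM.zero_mem
  add_mem' := fun ha hb => hM.add_mem _ ha _ hb
  smul_mem' := fun c x hx => hM.smul_mem c x hx

/-- `sstar M` as a submodule. -/
def troStarSubmodule {M : Set (H →L[ℂ] H)} (hM : IsTRO M) : Submodule ℂ (H →L[ℂ] H) where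
  carrier := sstar M
  zero_mem' := ⟨0, hM.zero_mem, star_zero _⟩
  add_mem' := by
    rintro _ _ ⟨a, ha, rfl⟩ ⟨b, hb, rfl⟩
    exact ⟨a + b, hM.add_mem _ ha _ hb, by simp⟩
  smul_mem' := by
    rintro c _ ⟨a, ha, rfl⟩
    exact ⟨(starRingEnd ℂ c) • a, hM.smul_mem _ _ ha, by simp⟩

lemma sstar_isClosed {M : Set (H →L[ℂ] H)} (hM : IsTRO M) : IsClosed (sstar M) := by
  have : sstar M = star ⁻¹' M := by
    ext T
    constructor
    · rintro ⟨a, ha, rfl⟩; simpa using ha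
    · intro hT; exact ⟨star T, hT, by simp⟩
  rw [this]
  exact hM.isClosed.preimage continuous_star

/-- Key kernel lemma : if `u η = 0` then `x η = 0` for all `x ∈ M`. -/
lemma ker_u_subset {M : Set (H →L[ℂ] H)} (hM : IsTRO M) {u : H →L[ℂ] H}
    (hu : AssociatedTo u M) {η : H} (hη : u η = 0) {x : H →L[ℂ] H} (hx : x ∈ M) :
    x η = 0 := by
  have hmem : star x * x ∈ clspan (pmul (sstar M) {u}) := by
    rw [hu.1]
    exact subset_clspan_s7 ⟨star x, ⟨x, hx, rfl⟩, x, hx, rfl⟩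
  have hzero : (star x * x) η = 0 := by
    refine clspan_apply_eq_zero ?_ hmem
    rintro _ ⟨a, ⟨y, hy, rfl⟩, b, rfl, rfl⟩
    simp [ContinuousLinearMap.mul_apply, hη]
  have : ⟪x η, x η⟫_ℂ = 0 := by
    have h1 : ⟪(star x) (x η), η⟫_ℂ = ⟪x η, x η⟫_ℂ := by
      rw [ContinuousLinearMap.star_eq_adjoint]
      exact ContinuousLinearMap.adjoint_inner_left x η (x η)
    rw [← h1]
    have : (star x) (x η) = 0 := by
      simpa [ContinuousLinearMap.mul_apply] using hzero
    simp [this]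
  exact inner_self_eq_zero.mp this

/-- Multiplying `clspan (M* M)` on the left by an element of `M` lands in `M`. -/
lemma mul_clspan_mem {M : Set (H →L[ℂ] H)} (hM : IsTRO M) {x : H →L[ℂ] H} (hx : x ∈ M)
    {T : H →L[ℂ] H} (hT : T ∈ clspan (pmul (sstar M) M)) : x * T ∈ M := by
  let S : Submodule ℂ (H →L[ℂ] H) :=
    { carrier := {T | x * T ∈ M}
      zero_mem' := by simpa using hM.zero_mem
      add_mem' := by
        intro a b ha hb
        simpa [mul_add] using hM.add_mem _ ha _ hb
      smul_mem' := by
        intro c a ha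
        simpa [mul_smul_comm] using hM.smul_mem c _ ha }
  have hSclosed : IsClosed (S : Set (H →L[ℂ] H)) := by
    have : Continuous fun T : H →L[ℂ] H => x * T := continuous_const.mul continuous_id
    exact hM.isClosed.preimage this
  refine clspan_subset_submodule (S := S) hSclosed ?_ hT
  rintro _ ⟨a, ⟨y, hy, rfl⟩, z, hz, rfl⟩
  show x * (star y * z) ∈ M
  rw [← mul_assoc]
  exact hM.mul_mem _ hx _ hy _ hz

/-- `u* x x* ∈ M*` for `x ∈ M`. -/
lemma m_mem {M : Set (H →L[ℂ] H)} (hM : IsTRO M) {u : H →L[ℂ] H}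
    (hu : AssociatedTo u M) {x : H →L[ℂ] H} (hx : x ∈ M) :
    star u * x * star x ∈ sstar M := by
  have h1 : star x * u ∈ clspan (pmul (sstar M) M) := by
    rw [← hu.1]
    exact subset_clspan_s7 ⟨star x, ⟨x, hx, rfl⟩, u, rfl, rfl⟩
  have h2 : x * (star x * u) ∈ M := mul_clspan_mem hM hx h1
  refine ⟨x * (star x * u), h2, ?_⟩
  simp [mul_assoc]

set_option maxHeartbeats 1000000 in
/-- Key density lemma: `u* (x ξ) ∈ closure (M* H)` for `x ∈ M`. -/
lemma ustar_app_mem {M : Set (H →L[ℂ] H)} (hM : IsTRO M) {u : H →L[ℂ] H}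
    (hu : AssociatedTo u M) {x : H →L[ℂ] H} (hx : x ∈ M) (ξ : H) :
    (star u) (x ξ) ∈ closure (appSet (sstar M)) := by
  obtain ⟨S, hSdef⟩ : ∃ S' : H →L[ℂ] H, S' = star x * x := ⟨_, rfl⟩
  have hS : IsSelfAdjoint S := by rw [hSdef]; exact IsSelfAdjoint.star_mul_self x
  rw [Metric.mem_closure_iff]
  intro ε hε
  obtain ⟨D, hDdef⟩ : ∃ D' : ℝ, D' = (‖u‖ + 1) * (‖ξ‖ + 1) := ⟨_, rfl⟩
  have hD : 0 < D := by rw [hDdef]; positivity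
  obtain ⟨a, hadef⟩ : ∃ a' : ℝ, a' = (ε / (2 * D)) ^ 2 := ⟨_, rfl⟩
  have ha : 0 < a := by rw [hadef]; positivity
  have hsqrta : Real.sqrt a = ε / (2 * D) := by
    rw [hadef, Real.sqrt_sq (by positivity)]
  -- the functions
  obtain ⟨f, hfdef⟩ : ∃ f' : ℝ → ℝ, f' = fun t => (|t| + a)⁻¹ := ⟨_, rfl⟩
  obtain ⟨g, hgdef⟩ : ∃ g' : ℝ → ℝ, g' = fun t => t * f t := ⟨_, rfl⟩
  obtain ⟨r, hrdef⟩ : ∃ r' : ℝ → ℝ, r' = fun t => 1 - g t := ⟨_, rfl⟩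
  have hf : Continuous f := by
    rw [hfdef]
    apply (continuous_abs.add continuous_const).inv₀
    intro t
    show |t| + a ≠ 0
    exact ne_of_gt (by have := abs_nonneg t; linarith)
  have hg : Continuous g := by rw [hgdef]; exact continuous_id.mul hf
  have hr : Continuous r := by rw [hrdef]; exact continuous_const.sub hg
  -- cfc computations
  have hgS : cfc g S = S * cfc f S := by
    have h0 := cfc_mul (id : ℝ → ℝ) f S (continuous_id.continuousOn) (hf.continuousOn)
    simp only [id_eq] at h0
    rw [hgdef]
    rw [h0, cfc_id ℝ S hS]
  have hrS : cfc r S = 1 - cfc g S := by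
    rw [hrdef, cfc_sub _ _ S (continuous_const.continuousOn) (hg.continuousOn)]
    congr 1
    exact cfc_const_one ℝ S
  -- spectrum bound
  have hspec : ∀ t ∈ spectrum ℝ S, ‖r t * t * r t‖ ≤ a := by
    intro t ht
    have htnn : (0:ℝ) ≤ t := by
      rw [hSdef] at ht
      exact spectrum_nonneg_of_nonneg (star_mul_self_nonneg x) ht
    have hta : 0 < t + a := by positivity
    have hr_eq : r t = a / (t + a) := by
      rw [hrdef, hgdef, hfdef]
      simp only [abs_of_nonneg htnn]
      field_simp
      ring
    rw [hr_eq]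
    have hcle : a / (t + a) ≤ 1 := by
      rw [div_le_one hta]; linarith
    have hcnn : 0 ≤ a / (t + a) := by positivity
    have hd1 : t * (a / (t + a)) ≤ a := by
      rw [mul_div_assoc'] -- t * a / (t+a)
      rw [div_le_iff₀ hta]
      nlinarith
    have hdnn : 0 ≤ t * (a / (t + a)) := by positivity
    have : a / (t + a) * t * (a / (t + a)) = (a / (t + a)) * (t * (a / (t + a))) := by ring
    rw [this, Real.norm_eq_abs, abs_of_nonneg (by positivity)]
    calc (a / (t + a)) * (t * (a / (t + a))) ≤ 1 * (t * (a / (t + a))) := by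
          exact mul_le_mul_of_nonneg_right hcle hdnn
      _ = t * (a / (t + a)) := one_mul _
      _ ≤ a := hd1
  -- norm bound on the error operator
  obtain ⟨T, hTdef⟩ : ∃ T' : H →L[ℂ] H, T' = x * cfc r S := ⟨_, rfl⟩
  have hTT : star T * T = cfc (fun t => r t * t * r t) S := by
    have hstarT : star T = cfc r S * star x := by
      rw [hTdef, star_mul, (cfc_predicate r S : IsSelfAdjoint _).star_eq]
    rw [hstarT]
    have h1 : cfc r S * star x * (x * cfc r S) = cfc r S * S * cfc r S := by
      rw [hSdef]; simp [mul_assoc]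
    rw [hTdef, h1]
    have hc : cfc (fun t => r t * t * r t) S = cfc r S * S * cfc r S := by
      calc cfc (fun t => r t * t * r t) S
          = cfc (fun t => r t * t) S * cfc r S :=
            cfc_mul _ r S ((hr.mul continuous_id).continuousOn) (hr.continuousOn)
        _ = (cfc r S * cfc (id : ℝ → ℝ) S) * cfc r S := by
            have h0 := cfc_mul r id S (hr.continuousOn) (continuous_id.continuousOn)
            simp only [id_eq] at h0
            rw [h0]
        _ = cfc r S * S * cfc r S := by rw [cfc_id ℝ S hS]
    rw [hc]
  have hTnorm : ‖T‖ ≤ Real.sqrt a := by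
    have h1 : ‖star T * T‖ ≤ a := by
      rw [hTT]
      exact norm_cfc_le ha.le hspec
    have h2 : ‖T‖ * ‖T‖ ≤ a := by rwa [CStarRing.norm_star_mul_self] at h1
    nlinarith [norm_nonneg T, Real.sq_sqrt ha.le, Real.sqrt_nonneg a,
      sq_nonneg (‖T‖ - Real.sqrt a)]
  -- the approximating element
  obtain ⟨m, hmdef⟩ : ∃ m' : H →L[ℂ] H, m' = star u * x * star x := ⟨_, rfl⟩
  have hmmem : m ∈ sstar M := by rw [hmdef]; exact m_mem hM hu hx
  refine ⟨m ((x * cfc f S) ξ), ⟨m, hmmem, (x * cfc f S) ξ, rfl⟩, ?_⟩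
  have hcomp : m * (x * cfc f S) = star u * (x * cfc g S) := by
    rw [hmdef, hgS, hSdef]
    simp [mul_assoc]
  have hxsub : x * cfc g S = x - T := by
    rw [hTdef, hrS, mul_sub, mul_one]
    abel
  have hval : m ((x * cfc f S) ξ) = (star u) ((x * cfc g S) ξ) := by
    have := congrArg (fun A : H →L[ℂ] H => A ξ) hcomp
    simpa [ContinuousLinearMap.mul_apply] using this
  rw [dist_eq_norm, hval]
  have hdiff : (star u) (x ξ) - (star u) ((x * cfc g S) ξ) = (star u) (T ξ) := by
    rw [hxsub]
    rw [← map_sub]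
    congr 1
    simp [ContinuousLinearMap.mul_apply, ContinuousLinearMap.sub_apply]
  rw [hdiff]
  have hb1 : ‖(star u) (T ξ)‖ ≤ ‖u‖ * (Real.sqrt a * ‖ξ‖) := by
    calc ‖(star u) (T ξ)‖ ≤ ‖(star u : H →L[ℂ] H)‖ * ‖T ξ‖ :=
          ContinuousLinearMap.le_opNorm _ _
      _ ≤ ‖(star u : H →L[ℂ] H)‖ * (‖T‖ * ‖ξ‖) := by
          apply mul_le_mul_of_nonneg_left (ContinuousLinearMap.le_opNorm _ _) (norm_nonneg _)
      _ ≤ ‖u‖ * (Real.sqrt a * ‖ξ‖) := by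
          rw [norm_star]
          apply mul_le_mul_of_nonneg_left _ (norm_nonneg u)
          exact mul_le_mul_of_nonneg_right hTnorm (norm_nonneg ξ)
  calc ‖(star u) (T ξ)‖ ≤ ‖u‖ * (Real.sqrt a * ‖ξ‖) := hb1
    _ = ‖u‖ * ‖ξ‖ * (ε / (2 * D)) := by rw [hsqrta]; ring
    _ < ε := by
        have hlt : ‖u‖ * ‖ξ‖ < D := by
          rw [hDdef]
          nlinarith [norm_nonneg u, norm_nonneg ξ]
        have h2D : 0 < 2 * D := by positivity
        have hpos : 0 < ε / (2 * D) := by positivity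
        calc ‖u‖ * ‖ξ‖ * (ε / (2 * D)) ≤ D * (ε / (2 * D)) :=
              mul_le_mul_of_nonneg_right hlt.le hpos.le
          _ = ε / 2 := by field_simp
          _ < ε := by linarith

/-- For a partial isometry `u` associated to a TRO `M`: if the closure of `u·H` equals the
closure of `M·H`, then the closure of `u*·H` equals the closure of `M*·H`. -/
theorem stmt7 {M : Set (H →L[ℂ] H)} (hM : IsTRO M) (u : H →L[ℂ] H)
    (hu_pi : u * star u * u = u) (hu : AssociatedTo u M)
    (h : closure (Set.range u) = closure (appSet M)) :
    closure (Set.range ⇑(star u : H →L[ℂ] H)) = closure (appSet (sstar M)) := by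
  -- direction 1: M* H ⊆ range u*
  have hq : ∀ x ∈ M, x = x * (star u * u) := by
    intro x hx
    ext η
    have hζ : u (η - (star u * u) η) = 0 := by
      have : u η - (u * star u * u) η = u (η - (star u * u) η) := by
        simp [ContinuousLinearMap.mul_apply, map_sub]
      rw [← this, hu_pi]
      simp
    have := ker_u_subset hM hu hζ hx
    rw [map_sub] at this
    have h2 : x η = x ((star u * u) η) := by
      have := sub_eq_zero.mp this
      exact this
    simpa [ContinuousLinearMap.mul_apply] using h2
  have hstarq : ∀ x ∈ M, star x = (star u * u) * star x := by
    intro x hx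
    conv_lhs => rw [hq x hx]
    rw [star_mul, star_mul, star_star]
  have hsub1 : appSet (sstar M) ⊆ Set.range ⇑(star u : H →L[ℂ] H) := by
    rintro v ⟨w, ⟨x, hx, rfl⟩, ξ, rfl⟩
    refine ⟨u ((star x) ξ), ?_⟩
    conv_rhs => rw [hstarq x hx]
    simp [ContinuousLinearMap.mul_apply]
  -- direction 2: range u* ⊆ closure (M* H)
  have hsub2 : Set.range ⇑(star u : H →L[ℂ] H) ⊆ closure (appSet (sstar M)) := by
    rintro _ ⟨ζ, rfl⟩
    have hupi_star : star u * u * star u = star u := by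
      have := congrArg star hu_pi
      simpa [star_mul, mul_assoc] using this
    have hrw : (star u) ζ = (star u) (u ((star u) ζ)) := by
      have := congrArg (fun A : H →L[ℂ] H => A ζ) hupi_star
      simpa [ContinuousLinearMap.mul_apply] using this.symm
    rw [hrw]
    have hmem : u ((star u) ζ) ∈ closure (appSet M) := by
      rw [← h]
      exact subset_closure ⟨(star u) ζ, rfl⟩
    have himg : ⇑(star u : H →L[ℂ] H) '' closure (appSet M) ⊆ closure (appSet (sstar M)) := by
      have h1 : ⇑(star u : H →L[ℂ] H) '' closure (appSet M) ⊆
          closure (⇑(star u : H →L[ℂ] H) '' appSet M) :=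
        image_closure_subset_closure_image (map_continuous _)
      refine h1.trans ?_
      have h2 : ⇑(star u : H →L[ℂ] H) '' appSet M ⊆ closure (appSet (sstar M)) := by
        rintro _ ⟨_, ⟨x, hx, ξ, rfl⟩, rfl⟩
        exact ustar_app_mem hM hu hx ξ
      calc closure (⇑(star u : H →L[ℂ] H) '' appSet M)
          ⊆ closure (closure (appSet (sstar M))) := closure_mono h2
        _ = closure (appSet (sstar M)) := closure_closure
    exact himg ⟨u ((star u) ζ), hmem, rfl⟩
  apply Set.Subset.antisymm
  · exact closure_minimal hsub2 isClosed_closure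
  · exact closure_mono (hsub1.trans subset_closure) |>.trans (by rw [closure_closure])
end
end
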